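/- Let A be an associative ℚ-algebra, X ∈ A nilpotent with (ad X)^(n+1) = 0. Then for all Y ∈ A and square-zero t, exp(X + tY) = (1 + t·Σ_{p=0}^{n} (1/(p+1)!)(ad X)^p(Y))·exp(X). -/

import Mathlib

open scoped TensorProduct

attribute [local instance 100] LieRing.ofAssociativeRing

/-- Exponential of an element of a `ℚ`-algebra, as a finite sum (`finsum`);
it is genuinely the exponential when the element is nilpotent. -/
noncomputable def expQ {A : Type*} [Ring A] [Algebra ℚ A] (a : A) : A :=
  ∑ᶠ k : ℕ, (k.factorial : ℚ)⁻¹ • a ^ k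

/-!
If `ε` commutes with `a` and `b` and `ε² = 0`, then `(a + εb)^m = a^m + ε Σ_{i<m} a^i b a^{m-1-i}`.
Left multiplication by `a` is `R + D` with `R` right multiplication by `a` and `D = ad a`, and
`R`, `D` commute, so the geometric sum `Σ_{i<m} (D + R)^i R^{m-1-i}` equals
`Σ_p C(m, p+1) D^p R^{m-1-p}`. Divided by `m!` and summed over `m`, this is the Cauchy product
of `Σ_p D^p b / (p+1)!` with `Σ_q a^q / q!`. The statement in `A ⊗ S` is the image of this
identity under `a ↦ a ⊗ 1`.
-/

open Finset LieAlgebra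

theorem Commute.geom_sum₂_add_eq_sum_choose {R : Type*} [Ring R] {x y : R}
    (h : Commute x y) (n : ℕ) :
    ∑ i ∈ range n, (x + y) ^ i * y ^ (n - 1 - i)
      = ∑ p ∈ range n, n.choose (p + 1) • (x ^ p * y ^ (n - 1 - p)) := by
  induction n with
  | zero => simp
  | succ n ih =>
    have hy : ∑ p ∈ range (n + 1), n.choose (p + 1) • (x ^ p * y ^ (n - p))
        = y * ∑ p ∈ range n, n.choose (p + 1) • (x ^ p * y ^ (n - 1 - p)) := by
      rw [sum_range_succ, Nat.choose_succ_self, zero_smul, add_zero, mul_sum]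
      refine sum_congr rfl fun p hp => ?_
      rw [mul_smul_comm, ← mul_assoc, ← (h.pow_left p).eq, mul_assoc, ← pow_succ',
        show n - 1 - p + 1 = n - p by have := mem_range.mp hp; omega]
    simp only [add_tsub_cancel_right]
    rw [(h.add_left (Commute.refl y)).geom_sum₂_succ_eq, ih, ← hy, h.add_pow]
    simp only [Nat.choose_succ_succ', add_smul, sum_add_distrib, nsmul_eq_mul']

theorem add_mul_pow_of_mul_self_eq_zero {B : Type*} [Ring B] {a b ε : B}
    (hεa : Commute ε a) (hεb : Commute ε b) (hε : ε * ε = 0) (n : ℕ) :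
    (a + ε * b) ^ n = a ^ n + ε * ∑ i ∈ range n, a ^ i * b * a ^ (n - 1 - i) := by
  induction n with
  | zero => simp
  | succ n ih =>
    set S := ∑ i ∈ range n, a ^ i * b * a ^ (n - 1 - i)
    have hεS : Commute ε S :=
      Commute.sum_right _ _ _ fun i _ =>
        ((hεa.pow_right i).mul_right hεb).mul_right (hεa.pow_right _)
    have hS : ∑ i ∈ range (n + 1), a ^ i * b * a ^ (n + 1 - 1 - i) = S * a + a ^ n * b := by
      rw [sum_range_succ, sum_mul, add_tsub_cancel_right, tsub_self, pow_zero, mul_one]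
      congr 1
      refine sum_congr rfl fun i hi => ?_
      rw [mul_assoc _ (a ^ _), ← pow_succ,
        show n - 1 - i + 1 = n - i by have := mem_range.mp hi; omega]
    have hεb_mid : a ^ n * (ε * b) = ε * (a ^ n * b) := by
      rw [← mul_assoc, ← (hεa.pow_right n).eq, mul_assoc]
    have hε_sq : ε * S * (ε * b) = 0 := by
      rw [mul_assoc, ← mul_assoc S, ← hεS.eq, mul_assoc, ← mul_assoc, hε, zero_mul]
    rw [pow_succ, ih, hS, add_mul, mul_add, mul_add, hεb_mid, hε_sq, pow_succ]
    noncomm_ring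

theorem sum_pow_mul_mul_pow_eq_sum_choose_ad {R B : Type*} [CommRing R] [Ring B] [Algebra R B]
    (a b : B) (n : ℕ) :
    ∑ i ∈ range n, a ^ i * b * a ^ (n - 1 - i)
      = ∑ p ∈ range n, n.choose (p + 1) • (((ad R B a) ^ p) b * a ^ (n - 1 - p)) := by
  have hL : ad R B a + LinearMap.mulRight R a = LinearMap.mulLeft R a := by
    rw [ad_eq_lmul_left_sub_lmul_right, Pi.sub_apply, sub_add_cancel]
  have hD : Commute (ad R B a) (LinearMap.mulRight R a) := by
    rw [← sub_eq_of_eq_add hL.symm]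
    exact (LinearMap.commute_mulLeft_right a a).sub_left (Commute.refl _)
  have key := hD.geom_sum₂_add_eq_sum_choose n
  simp_rw [hL, (hD.pow_pow _ _).eq] at key
  simpa [LinearMap.pow_mulLeft, LinearMap.pow_mulRight, mul_assoc] using
    LinearMap.congr_fun key b

theorem Finset.sum_range_sum_mul_eq_sum_mul_sum {B : Type*} [NonUnitalNonAssocSemiring B]
    (f g : ℕ → B) {M : ℕ} (h : ∀ p q, M ≤ p + q → f p * g q = 0) :
    ∑ m ∈ range M, ∑ p ∈ range (m + 1), f p * g (m - p)
      = (∑ p ∈ range M, f p) * ∑ q ∈ range M, g q := by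
  rw [sum_range_diag_flip M fun p q => f p * g q, sum_mul_sum]
  refine sum_congr rfl fun p _ =>
    sum_subset (range_subset_range.2 (Nat.sub_le M p)) fun q _ hq => h p q ?_
  have := mem_range.not.1 hq
  omega

theorem expQ_eq_sum_range {A : Type*} [Ring A] [Algebra ℚ A] {a : A} {M : ℕ} (h : a ^ M = 0) :
    expQ a = ∑ k ∈ range M, (k.factorial : ℚ)⁻¹ • a ^ k := by
  refine finsum_eq_sum_of_support_subset _ fun k hk => ?_
  by_contra hkM
  rw [coe_range, Set.mem_Iio, not_lt] at hkM
  exact hk (by simp only [pow_eq_zero_of_le hkM h, smul_zero])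

theorem factorial_inv_smul_choose_smul {B : Type*} [Ring B] [Algebra ℚ B] (x y : B)
    {m p : ℕ} (hpm : p ≤ m) :
    ((m + 1).factorial : ℚ)⁻¹ • (m + 1).choose (p + 1) • (x * y)
      = (((p + 1).factorial : ℚ)⁻¹ • x) * (((m - p).factorial : ℚ)⁻¹ • y) := by
  rw [← Nat.cast_smul_eq_nsmul ℚ, smul_smul, smul_mul_smul_comm,
    Nat.cast_choose ℚ (Nat.succ_le_succ hpm), Nat.succ_sub_succ]
  congr 1
  field_simp

theorem sum_factorial_inv_smul_sum_pow_mul_mul_pow {B : Type*} [Ring B] [Algebra ℚ B]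
    {a b : B} {K : ℕ} (ha : a ^ K = 0) (hb : ((ad ℚ B a) ^ K) b = 0) :
    ∑ m ∈ range (2 * K + 1), (m.factorial : ℚ)⁻¹ • ∑ i ∈ range m, a ^ i * b * a ^ (m - 1 - i)
      = (∑ p ∈ range (2 * K), ((p + 1).factorial : ℚ)⁻¹ • ((ad ℚ B a) ^ p) b)
        * ∑ q ∈ range (2 * K), (q.factorial : ℚ)⁻¹ • a ^ q := by
  rw [sum_range_succ', range_zero, sum_empty, smul_zero, add_zero,
    ← sum_range_sum_mul_eq_sum_mul_sum]
  · refine sum_congr rfl fun m _ => ?_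
    rw [sum_pow_mul_mul_pow_eq_sum_choose_ad (R := ℚ), smul_sum]
    refine sum_congr rfl fun p hp => ?_
    rw [add_tsub_cancel_right,
      factorial_inv_smul_choose_smul _ _ (Nat.lt_succ_iff.1 (mem_range.1 hp))]
  · intro p q hpq
    rcases le_or_gt K p with hp | hq
    · rw [Module.End.pow_map_zero_of_le hp hb, smul_zero, zero_mul]
    · rw [pow_eq_zero_of_le (by omega) ha, smul_zero, mul_zero]

theorem add_mul_pow_eq_zero_of_mul_self_eq_zero {B : Type*} [Ring B] {a b ε : B}
    (hεa : Commute ε a) (hεb : Commute ε b) (hε : ε * ε = 0) {K : ℕ} (ha : a ^ K = 0) :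
    (a + ε * b) ^ (2 * K + 1) = 0 := by
  rw [add_mul_pow_of_mul_self_eq_zero hεa hεb hε, pow_eq_zero_of_le (by omega) ha, zero_add]
  refine mul_eq_zero_of_right _ (sum_eq_zero fun i _ => ?_)
  rcases le_or_gt K i with hi | hi
  · rw [pow_eq_zero_of_le hi ha, zero_mul, zero_mul]
  · rw [pow_eq_zero_of_le (show K ≤ 2 * K + 1 - 1 - i by omega) ha, mul_zero]

theorem expQ_add_mul_of_mul_self_eq_zero {B : Type*} [Ring B] [Algebra ℚ B] {a ε : B} (b : B)
    {n : ℕ} (ha : IsNilpotent a) (hb : ((ad ℚ B a) ^ (n + 1)) b = 0)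
    (hεa : Commute ε a) (hεb : Commute ε b) (hε : ε * ε = 0) :
    expQ (a + ε * b) = (1 + ε * ∑ p ∈ range (n + 1),
      (1 / (p + 1).factorial : ℚ) • ((ad ℚ B a) ^ p) b) * expQ a := by
  obtain ⟨k, hk⟩ := ha
  set K := max k (n + 1)
  have haK : a ^ K = 0 := pow_eq_zero_of_le (le_max_left _ _) hk
  have hW : ∑ p ∈ range (n + 1), (1 / (p + 1).factorial : ℚ) • ((ad ℚ B a) ^ p) b
      = ∑ p ∈ range (2 * K), ((p + 1).factorial : ℚ)⁻¹ • ((ad ℚ B a) ^ p) b := by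
    simp_rw [one_div]
    refine sum_subset (range_subset_range.2 (by omega)) fun p _ hp => ?_
    rw [Module.End.pow_map_zero_of_le (not_lt.1 (mem_range.not.1 hp)) hb, smul_zero]
  rw [expQ_eq_sum_range (add_mul_pow_eq_zero_of_mul_self_eq_zero hεa hεb hε haK)]
  simp_rw [add_mul_pow_of_mul_self_eq_zero hεa hεb hε, smul_add, ← mul_smul_comm]
  rw [sum_add_distrib, ← mul_sum,
    sum_factorial_inv_smul_sum_pow_mul_mul_pow haK
      (Module.End.pow_map_zero_of_le (le_max_right _ _) hb),
    hW, ← expQ_eq_sum_range (pow_eq_zero_of_le (by omega) haK),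
    ← expQ_eq_sum_range (pow_eq_zero_of_le (by omega) haK), add_mul, one_mul, mul_assoc]

theorem AlgHom.map_ad_pow_apply {R A B : Type*} [CommRing R] [Ring A] [Ring B] [Algebra R A]
    [Algebra R B] (f : A →ₐ[R] B) (a x : A) (p : ℕ) :
    f (((ad R A a) ^ p) x) = ((ad R B (f a)) ^ p) (f x) := by
  induction p with
  | zero => rfl
  | succ p ih => simp [pow_succ', ad_apply, Ring.lie_def, ih]

/-- The right logarithmic derivative of `exp`: for nilpotent `X` with
`(ad X)^(n+1) = 0` and square-zero `t` in a commutative `ℚ`-algebra `S`,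
`exp(X + tY) = (1 + t·Σ (1/(p+1)!)(ad X)^p Y)·exp(X)` in `A ⊗ S`. -/
theorem right_log_derivative {A S : Type*} [Ring A] [Algebra ℚ A] [CommRing S] [Algebra ℚ S]
    (X Y : A) (n : ℕ) (hX : IsNilpotent X) (had : (LieAlgebra.ad ℚ A X) ^ (n + 1) = 0)
    (t : S) (ht : t ^ 2 = 0) :
    letI X' : A ⊗[ℚ] S := X ⊗ₜ 1
    letI t' : A ⊗[ℚ] S := (1 : A) ⊗ₜ t
    letI W : A := ∑ p ∈ Finset.range (n + 1),
      ((1 / (p + 1).factorial : ℚ)) • ((LieAlgebra.ad ℚ A X) ^ p) Y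
    expQ (X' + t' * (Y ⊗ₜ 1)) = (1 + t' * (W ⊗ₜ 1)) * expQ X' := by
  let ι : A →ₐ[ℚ] A ⊗[ℚ] S := Algebra.TensorProduct.includeLeft
  have hι (x : A) : x ⊗ₜ (1 : S) = ι x := rfl
  have ht' (x : A) : Commute ((1 : A) ⊗ₜ t) (x ⊗ₜ (1 : S)) :=
    Commute.tmul (R := ℚ) (Commute.one_left x) (Commute.all t 1)
  have hb : ((ad ℚ _ (ι X)) ^ (n + 1)) (ι Y) = 0 := by
    rw [← ι.map_ad_pow_apply, had, LinearMap.zero_apply, map_zero]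
  simp only [hι, map_sum, map_smul, ι.map_ad_pow_apply]
  refine expQ_add_mul_of_mul_self_eq_zero _ (hX.map ι) hb (ht' X) (ht' Y) ?_
  rw [Algebra.TensorProduct.tmul_mul_tmul, one_mul, ← sq, ht, TensorProduct.tmul_zero]
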